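/- Let D be a Fredholm bounded operator between Hilbert spaces H₁ and H₂ and P the orthogonal projection onto ker D. Set F = D (P + D*D)^{-1/2}. Then F*F - 1 and FF* - 1 are compact operators (in fact finite rank), so F is a unitary modulo compacts. -/

import Mathlib

/-!
Write `T = P + D*D` and `S = T^{-1/2}`. Since `D` has closed range it is bounded below on
`(ker D)ᗮ`, so the Pythagorean splitting `x = P x + (1 - P) x` gives
`re ⟪T x, x⟫ = ‖P x‖² + ‖D x‖² ≥ c ‖x‖²`: `T` is strictly positive and `S T S = S S T = 1`.
Then `F*F - 1 = S D*D S - S T S = -S P S` has range inside `S (ker D)`. On the other hand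
`FF*` fixes `D x = D (1 - P) x`, because `D*D` and `T` agree on `(ker D)ᗮ`; being self-adjoint,
`FF* - 1` therefore maps into `(range D)ᗮ ≅ H₂ ⧸ range D`. Finite rank operators are compact.
-/

open ContinuousLinearMap
open scoped InnerProductSpace NNReal

section FiniteRank

variable {𝕜 E F : Type*} [NontriviallyNormedField 𝕜] [ProperSpace 𝕜]
  [NormedAddCommGroup E] [NormedSpace 𝕜 E] [NormedAddCommGroup F] [NormedSpace 𝕜 F]

theorem ContinuousLinearMap.isCompactOperator_of_finiteDimensional_range (f : E →L[𝕜] F)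
    [FiniteDimensional 𝕜 f.range] : IsCompactOperator f :=
  have : ProperSpace f.range := FiniteDimensional.proper 𝕜 _
  (isCompactOperator_of_locallyCompactSpace_dom f.rangeRestrict).clm_comp f.range.subtypeL

end FiniteRank

namespace CFC

variable {A : Type*} [PartialOrder A] [Ring A] [StarRing A] [TopologicalSpace A]
  [StarOrderedRing A] [Algebra ℝ A] [ContinuousFunctionalCalculus ℝ A IsSelfAdjoint]
  [NonnegSpectrumClass ℝ A]

lemma rpow_neg_half_mul_mul_rpow_neg_half {a : A} (ha : IsStrictlyPositive a) :
    a ^ (-(1 / 2) : ℝ) * a * a ^ (-(1 / 2) : ℝ) = 1 := by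
  conv_lhs => enter [1, 2]; rw [← rpow_one a ha.nonneg]
  rw [← rpow_add ha.isUnit, ← rpow_add ha.isUnit,
    show -(1 / 2) + 1 + -(1 / 2) = (0 : ℝ) by norm_num, rpow_zero a ha.nonneg]

lemma rpow_neg_half_mul_rpow_neg_half_mul {a : A} (ha : IsStrictlyPositive a) :
    a ^ (-(1 / 2) : ℝ) * a ^ (-(1 / 2) : ℝ) * a = 1 := by
  conv_lhs => enter [2]; rw [← rpow_one a ha.nonneg]
  rw [← rpow_add ha.isUnit, ← rpow_add ha.isUnit,
    show -(1 / 2) + -(1 / 2) + 1 = (0 : ℝ) by norm_num, rpow_zero a ha.nonneg]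

end CFC

namespace ContinuousLinearMap

variable {𝕜 E F : Type*} [RCLike 𝕜]
  [NormedAddCommGroup E] [InnerProductSpace 𝕜 E] [CompleteSpace E]
  [NormedAddCommGroup F] [InnerProductSpace 𝕜 F] [CompleteSpace F]

omit [CompleteSpace F] in
lemma apply_starProjection_orthogonal_ker (D : E →L[𝕜] F) (x : E) :
    D (D.kerᗮ.starProjection x) = D x := by
  conv_rhs => rw [← D.ker.starProjection_add_starProjection_orthogonal x]
  rw [map_add, show D (D.ker.starProjection x) = 0 from D.ker.starProjection_apply_mem x,
    zero_add]

lemma exists_norm_le_mul_norm_apply_of_mem_orthogonal_ker (D : E →L[𝕜] F)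
    (hD : IsClosed (D.range : Set F)) : ∃ C : ℝ≥0, ∀ x ∈ D.kerᗮ, ‖x‖ ≤ C * ‖D x‖ := by
  set g : D.kerᗮ →L[𝕜] F := D ∘L D.kerᗮ.subtypeL
  have hinj : Function.Injective g := by
    rw [injective_iff_map_eq_zero]
    intro x hx
    exact Subtype.ext <| Submodule.disjoint_def.mp D.ker.orthogonal_disjoint x hx x.2
  have hrange : Set.range g = D.range := by
    ext y
    refine ⟨fun ⟨x, hx⟩ ↦ ⟨x, hx⟩, ?_⟩
    rintro ⟨x, rfl⟩
    exact ⟨⟨_, D.kerᗮ.starProjection_apply_mem x⟩, D.apply_starProjection_orthogonal_ker x⟩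
  obtain ⟨C, hC⟩ := g.antilipschitz_of_injective_of_isClosed_range hinj (hrange ▸ hD)
  exact ⟨C, fun x hx ↦ g.bound_of_antilipschitz hC ⟨x, hx⟩⟩

lemma exists_norm_sq_le_mul_norm_sq_starProjection_ker_add (D : E →L[𝕜] F)
    (hD : IsClosed (D.range : Set F)) :
    ∃ C : ℝ≥0, ∀ x, ‖x‖ ^ 2 ≤ (1 + C ^ 2) * (‖D.ker.starProjection x‖ ^ 2 + ‖D x‖ ^ 2) := by
  obtain ⟨C, hC⟩ := D.exists_norm_le_mul_norm_apply_of_mem_orthogonal_ker hD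
  refine ⟨C, fun x ↦ ?_⟩
  have hle := hC _ (D.kerᗮ.starProjection_apply_mem x)
  rw [D.apply_starProjection_orthogonal_ker x] at hle
  rw [D.ker.norm_sq_eq_add_norm_sq_starProjection x]
  have := pow_le_pow_left₀ (norm_nonneg _) hle 2
  nlinarith [sq_nonneg (C * ‖D.ker.starProjection x‖), sq_nonneg ‖D x‖]

lemma re_inner_starProjection_ker_add_adjoint_comp_self_apply (D : E →L[𝕜] F) (x : E) :
    RCLike.re ⟪(D.ker.starProjection + adjoint D ∘L D) x, x⟫_𝕜 =
      ‖D.ker.starProjection x‖ ^ 2 + ‖D x‖ ^ 2 := by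
  rw [add_apply, inner_add_left, map_add, D.ker.re_inner_starProjection_eq_normSq,
    comp_apply, adjoint_inner_left, inner_self_eq_norm_sq, Submodule.starProjection_apply,
    Submodule.coe_norm]

lemma isStrictlyPositive_starProjection_ker_add_adjoint_comp_self (D : E →L[𝕜] F)
    (hD : IsClosed (D.range : Set F)) :
    IsStrictlyPositive (D.ker.starProjection + adjoint D ∘L D) := by
  refine IsUnit.isStrictlyPositive ?_ <| (nonneg_iff_isPositive _).mpr <|
    (IsPositive.of_isStarProjection isStarProjection_starProjection).add
      (isPositive_adjoint_comp_self D)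
  obtain ⟨C, hC⟩ := D.exists_norm_sq_le_mul_norm_sq_starProjection_ker_add hD
  refine isUnit_of_forall_le_norm_inner_map _ (c := (1 + C ^ 2)⁻¹) (by positivity) fun x ↦ ?_
  calc ‖x‖ ^ 2 * ((1 + C ^ 2)⁻¹ : ℝ≥0)
      ≤ ‖D.ker.starProjection x‖ ^ 2 + ‖D x‖ ^ 2 := by
        rw [NNReal.coe_inv, ← div_eq_mul_inv, div_le_iff₀' (by positivity)]
        exact_mod_cast hC x
    _ = RCLike.re ⟪(D.ker.starProjection + adjoint D ∘L D) x, x⟫_𝕜 :=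
        (D.re_inner_starProjection_ker_add_adjoint_comp_self_apply x).symm
    _ ≤ ‖⟪(D.ker.starProjection + adjoint D ∘L D) x, x⟫_𝕜‖ := RCLike.re_le_norm _

lemma adjoint_comp_self_sub_one_eq_neg_mul_starProjection_ker_mul (D : E →L[𝕜] F)
    {S : E →L[𝕜] E} (hS : IsSelfAdjoint S)
    (h : S * (D.ker.starProjection + adjoint D ∘L D) * S = 1) :
    adjoint (D ∘L S) ∘L (D ∘L S) - 1 = -(S * D.ker.starProjection * S) := by
  have : adjoint (D ∘L S) ∘L (D ∘L S) = S * (adjoint D ∘L D) * S := by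
    rw [adjoint_comp, hS.adjoint_eq]; rfl
  rw [this, ← h]
  noncomm_ring

lemma comp_comp_adjoint_apply_apply (D : E →L[𝕜] F) {S : E →L[𝕜] E} (hS : IsSelfAdjoint S)
    (h : S * S * (D.ker.starProjection + adjoint D ∘L D) = 1) (x : E) :
    (D ∘L S) (adjoint (D ∘L S) (D x)) = D x := by
  set y := D.kerᗮ.starProjection x
  have hDy : D y = D x := D.apply_starProjection_orthogonal_ker x
  have hTy : (D.ker.starProjection + adjoint D ∘L D) y = adjoint D (D y) := by
    rw [add_apply, D.ker.starProjection_apply_eq_zero_iff.mpr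
      (D.kerᗮ.starProjection_apply_mem x), zero_add, comp_apply]
  calc (D ∘L S) (adjoint (D ∘L S) (D x))
      = D (S (S (adjoint D (D y)))) := by rw [← hDy, adjoint_comp, hS.adjoint_eq]; rfl
    _ = D ((S * S * (D.ker.starProjection + adjoint D ∘L D)) y) := by rw [← hTy]; rfl
    _ = D x := by rw [h, one_apply_eq_self, hDy]

lemma finiteDimensional_range_adjoint_comp_self_sub_one (D : E →L[𝕜] F)
    [FiniteDimensional 𝕜 D.ker] {S : E →L[𝕜] E} (hS : IsSelfAdjoint S)
    (h : S * (D.ker.starProjection + adjoint D ∘L D) * S = 1) :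
    FiniteDimensional 𝕜 (adjoint (D ∘L S) ∘L (D ∘L S) - 1).range := by
  rw [D.adjoint_comp_self_sub_one_eq_neg_mul_starProjection_ker_mul hS h, toLinearMap_neg,
    LinearMap.range_neg]
  have hle : (S * D.ker.starProjection * S).range ≤ D.ker.map (S : E →ₗ[𝕜] E) :=
    calc (S * D.ker.starProjection * S).range
        ≤ (S * D.ker.starProjection).range := LinearMap.range_comp_le_range _ _
      _ = D.ker.map (S : E →ₗ[𝕜] E) := by
        rw [mul_def, toLinearMap_comp, LinearMap.range_comp, Submodule.range_starProjection]
  exact Submodule.finiteDimensional_of_le hle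

omit [CompleteSpace F] in
lemma range_le_orthogonal_of_le_ker {A : E →L[𝕜] E} (hA : IsSelfAdjoint A)
    {K : Submodule 𝕜 E} (hK : K ≤ A.ker) : A.range ≤ Kᗮ :=
  A.range.le_orthogonal_orthogonal.trans <|
    Submodule.orthogonal_le (by rwa [orthogonal_range, hA.adjoint_eq])

lemma finiteDimensional_range_comp_adjoint_sub_one (D : E →L[𝕜] F)
    (hD : IsClosed (D.range : Set F)) [FiniteDimensional 𝕜 (F ⧸ D.range)]
    {S : E →L[𝕜] E} (hS : IsSelfAdjoint S)
    (h : S * S * (D.ker.starProjection + adjoint D ∘L D) = 1) :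
    FiniteDimensional 𝕜 ((D ∘L S) ∘L adjoint (D ∘L S) - 1).range := by
  have : CompleteSpace D.range := hD.completeSpace_coe
  have : FiniteDimensional 𝕜 (D.rangeᗮ : Submodule 𝕜 F) :=
    (D.range.quotientEquivOfIsCompl _ D.range.isCompl_orthogonal).finiteDimensional
  have hle : ((D ∘L S) ∘L adjoint (D ∘L S) - 1).range ≤ D.rangeᗮ :=
    range_le_orthogonal_of_le_ker ((isPositive_self_comp_adjoint _).isSelfAdjoint.sub (.one _))
      (by rintro _ ⟨x, rfl⟩; simp only [LinearMap.mem_ker, coe_coe, sub_apply, one_apply_eq_self,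
        comp_apply, D.comp_comp_adjoint_apply_apply hS h x, sub_self])
  exact Submodule.finiteDimensional_of_le hle

end ContinuousLinearMap

/-- for a Fredholm bounded operator `D : H₁ → H₂` with `P` the orthogonal
projection onto `ker D`, the operator `F = D (P + D*D)^{-1/2}` satisfies that `F*F - 1` and
`FF* - 1` are compact (in fact finite rank); i.e. `F` is a unitary modulo compacts. -/
theorem stmt_2 {H₁ H₂ : Type*}
    [NormedAddCommGroup H₁] [InnerProductSpace ℂ H₁] [CompleteSpace H₁]
    [NormedAddCommGroup H₂] [InnerProductSpace ℂ H₂] [CompleteSpace H₂]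
    (D : H₁ →L[ℂ] H₂)
    (hker : FiniteDimensional ℂ (LinearMap.ker (D : H₁ →ₗ[ℂ] H₂)))
    (hcoker : FiniteDimensional ℂ (H₂ ⧸ LinearMap.range (D : H₁ →ₗ[ℂ] H₂)))
    (hclosed : IsClosed (LinearMap.range (D : H₁ →ₗ[ℂ] H₂) : Set H₂))
    (P : H₁ →L[ℂ] H₁) (hP1 : IsIdempotentElem P) (hP2 : IsSelfAdjoint P)
    (hP3 : LinearMap.range (P : H₁ →ₗ[ℂ] H₁) = LinearMap.ker (D : H₁ →ₗ[ℂ] H₂))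
    (F : H₁ →L[ℂ] H₂)
    (hF : F = D ∘L cfc (fun x : ℝ => x ^ (-(1/2) : ℝ)) (P + adjoint D ∘L D)) :
    (IsCompactOperator ⇑(adjoint F ∘L F - 1) ∧
      FiniteDimensional ℂ (LinearMap.range ((adjoint F ∘L F - 1 : H₁ →L[ℂ] H₁) : H₁ →ₗ[ℂ] H₁))) ∧
    (IsCompactOperator ⇑(F ∘L adjoint F - 1) ∧
      FiniteDimensional ℂ (LinearMap.range ((F ∘L adjoint F - 1 : H₂ →L[ℂ] H₂) : H₂ →ₗ[ℂ] H₂))) := by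
  obtain rfl : P = D.ker.starProjection :=
    IsStarProjection.ext ⟨hP1, hP2⟩ isStarProjection_starProjection
      (by rw [Submodule.range_starProjection]; exact hP3)
  have hT := D.isStrictlyPositive_starProjection_ker_add_adjoint_comp_self hclosed
  rw [← CFC.rpow_eq_cfc_real hT.nonneg] at hF
  subst hF
  have hS : IsSelfAdjoint ((D.ker.starProjection + adjoint D ∘L D) ^ (-(1 / 2) : ℝ)) :=
    CFC.rpow_nonneg.isSelfAdjoint
  have h₁ := D.finiteDimensional_range_adjoint_comp_self_sub_one hS
    (CFC.rpow_neg_half_mul_mul_rpow_neg_half hT)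
  have h₂ := D.finiteDimensional_range_comp_adjoint_sub_one hclosed hS
    (CFC.rpow_neg_half_mul_rpow_neg_half_mul hT)
  exact ⟨⟨isCompactOperator_of_finiteDimensional_range _, h₁⟩,
    ⟨isCompactOperator_of_finiteDimensional_range _, h₂⟩⟩
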